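/- arXiv:1812.09709 — 2 statements merged into one kernel-verified Lean document; each statement's English description precedes it below -/
import Mathlib

section
/- Define J(j,k,ω) = ω(k×j)ᵀ + (j·ω)[k]× and P_l ω = ω − (l·ω/|l|²) l for l ≠ 0, and set 𝒥(j,k,ω) = J(j,k, P_{j+k} ω). Then for all j ∈ ℝ³ with k ≠ 0 and j+k ≠ 0 in ℝ³, and all a, b ∈ ℂ³, J(j,k,P_{j+k} a) ((k × b)/|k|²) + J(j,−j−k, P_{−k} b) ((−(j+k) × a)/|j+k|²) = 0, where P_{j+k} and P_{−k} are the projections onto the orthogonal complements of j+k and −k respectively. -/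
open Matrix

noncomputable def crossMatC (a : Fin 3 → ℂ) : Matrix (Fin 3) (Fin 3) ℂ :=
  !![0, -a 2, a 1; a 2, 0, -a 0; -a 1, a 0, 0]

noncomputable def Jmat (j k ω : Fin 3 → ℂ) : Matrix (Fin 3) (Fin 3) ℂ :=
  vecMulVec ω (crossProduct k j) + (j ⬝ᵥ ω) • crossMatC k

noncomputable def toC (j : Fin 3 → ℝ) : Fin 3 → ℂ := fun i => (j i : ℂ)

noncomputable def leray (l : Fin 3 → ℝ) (ω : Fin 3 → ℂ) : Fin 3 → ℂ :=
  ω - ((toC l ⬝ᵥ ω) / ((l ⬝ᵥ l : ℝ) : ℂ)) • toC l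

noncomputable def lerayC (l : Fin 3 → ℂ) (ω : Fin 3 → ℂ) : Fin 3 → ℂ :=
  ω - ((l ⬝ᵥ ω) / (l ⬝ᵥ l)) • l

lemma mulVec_Jmat (j k ω v : Fin 3 → ℂ) :
    Jmat j k ω *ᵥ v = (crossProduct k j ⬝ᵥ v) • ω + (j ⬝ᵥ ω) • crossProduct k v := by
  funext i
  fin_cases i <;>
  · simp [Jmat, crossMatC, crossProduct, mulVec, vecMulVec, dotProduct, Fin.sum_univ_three]
    ring

lemma lagrange (x y z : Fin 3 → ℂ) :
    crossProduct x y ⬝ᵥ crossProduct x z = (x ⬝ᵥ x) * (y ⬝ᵥ z) - (x ⬝ᵥ z) * (y ⬝ᵥ x) := by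
  simp [crossProduct, dotProduct, Fin.sum_univ_three]
  ring

lemma cross_cross_self (x y : Fin 3 → ℂ) :
    crossProduct x (crossProduct x y) = (x ⬝ᵥ y) • x - (x ⬝ᵥ x) • y := by
  funext i
  fin_cases i <;>
  · simp [crossProduct, dotProduct, Fin.sum_univ_three]
    ring

lemma key (J K : Fin 3 → ℂ) (hK : K ⬝ᵥ K ≠ 0) (hJK : (J + K) ⬝ᵥ (J + K) ≠ 0)
    (a b : Fin 3 → ℂ) :
    Jmat J K (lerayC (J + K) a) *ᵥ ((K ⬝ᵥ K)⁻¹ • crossProduct K b)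
      + Jmat J (-(J + K)) (lerayC (-K) b) *ᵥ
        (((J + K) ⬝ᵥ (J + K))⁻¹ • crossProduct (-(J + K)) a) = 0 := by
  set L := J + K with hL
  set ω₁ := lerayC L a with hω₁
  set ω₂ := lerayC (-K) b with hω₂
  have hω₂' : ω₂ = b - ((K ⬝ᵥ b) / (K ⬝ᵥ K)) • K := by
    rw [hω₂, lerayC]
    simp only [neg_dotProduct, dotProduct_neg, neg_neg, neg_div, neg_smul_neg]
  have hω₁' : ω₁ = a - ((L ⬝ᵥ a) / (L ⬝ᵥ L)) • L := by rw [hω₁, lerayC]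
  -- the two scalar coefficients
  have hc2 : crossProduct (-L) J ⬝ᵥ (((L ⬝ᵥ L))⁻¹ • crossProduct (-L) a) = J ⬝ᵥ ω₁ := by
    rw [dotProduct_smul, smul_eq_mul, lagrange, hω₁', dotProduct_sub, dotProduct_smul,
      smul_eq_mul]
    simp only [neg_dotProduct, dotProduct_neg, neg_neg]
    generalize (L ⬝ᵥ L : ℂ) = D at hJK ⊢
    generalize (L ⬝ᵥ a : ℂ) = P
    generalize (J ⬝ᵥ a : ℂ) = Q
    generalize (J ⬝ᵥ L : ℂ) = R
    field_simp
  have hd2 : J ⬝ᵥ ω₂ = crossProduct K J ⬝ᵥ ((K ⬝ᵥ K)⁻¹ • crossProduct K b) := by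
    rw [dotProduct_smul, smul_eq_mul, lagrange, hω₂', dotProduct_sub, dotProduct_smul,
      smul_eq_mul]
    generalize (K ⬝ᵥ K : ℂ) = D at hK ⊢
    generalize (K ⬝ᵥ b : ℂ) = P
    generalize (J ⬝ᵥ b : ℂ) = Q
    generalize (J ⬝ᵥ K : ℂ) = R
    field_simp
  -- the two cross-product vectors
  have hx1 : crossProduct K ((K ⬝ᵥ K)⁻¹ • crossProduct K b) = -ω₂ := by
    rw [LinearMap.map_smul, cross_cross_self, hω₂', smul_sub, smul_smul, smul_smul,
      inv_mul_cancel₀ hK, one_smul, neg_sub, div_eq_inv_mul]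
  have hx2 : crossProduct (-L) (((L ⬝ᵥ L))⁻¹ • crossProduct (-L) a) = -ω₁ := by
    rw [LinearMap.map_smul, cross_cross_self, hω₁']
    simp only [neg_dotProduct, dotProduct_neg, neg_neg, neg_smul, smul_neg, smul_sub,
      smul_smul]
    rw [inv_mul_cancel₀ hJK, one_smul, neg_sub, div_eq_inv_mul]
  rw [mulVec_Jmat, mulVec_Jmat, hc2, hd2.symm, hx1, hx2]
  module

lemma toC_dot (l : Fin 3 → ℝ) : ((l ⬝ᵥ l : ℝ) : ℂ) = toC l ⬝ᵥ toC l := by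
  simp [toC, dotProduct, Fin.sum_univ_three]

lemma toC_add (x y : Fin 3 → ℝ) : toC (x + y) = toC x + toC y := by
  funext i; simp [toC]

lemma toC_neg (x : Fin 3 → ℝ) : toC (-x) = -toC x := by
  funext i; simp [toC]

lemma leray_eq (l : Fin 3 → ℝ) (ω : Fin 3 → ℂ) : leray l ω = lerayC (toC l) ω := by
  rw [leray, lerayC, toC_dot]

/-- Pairwise cancellation identity for the helicity Casimir: the terms with indices `k` and
`−j−k` in the sum `Σ_k 𝒥(j,k,ω_{j+k}) (k × ω_{−k})/|k|²` cancel. -/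
theorem helicity_pair_cancel (j k : Fin 3 → ℝ) (hk : k ≠ 0) (hjk : j + k ≠ 0)
    (a b : Fin 3 → ℂ) :
    Jmat (toC j) (toC k) (leray (j + k) a) *ᵥ
        ((((k ⬝ᵥ k : ℝ) : ℂ))⁻¹ • crossProduct (toC k) b)
      + Jmat (toC j) (toC (-(j + k))) (leray (-k) b) *ᵥ
        (((((j + k) ⬝ᵥ (j + k) : ℝ) : ℂ))⁻¹ • crossProduct (toC (-(j + k))) a) = 0 := by
  have hK : toC k ⬝ᵥ toC k ≠ 0 := by
    rw [← toC_dot, ne_eq, Complex.ofReal_eq_zero, dotProduct_self_eq_zero]; exact hk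
  have hJK : (toC j + toC k) ⬝ᵥ (toC j + toC k) ≠ 0 := by
    rw [← toC_add, ← toC_dot, ne_eq, Complex.ofReal_eq_zero, dotProduct_self_eq_zero]
    exact hjk
  have h1 : leray (j + k) a = lerayC (toC j + toC k) a := by
    rw [leray_eq, toC_add]
  have h2 : leray (-k) b = lerayC (-(toC k)) b := by
    rw [leray_eq, toC_neg]
  have h3 : toC (-(j + k)) = -(toC j + toC k) := by rw [toC_neg, toC_add]
  rw [h1, h2, h3, toC_dot, toC_dot, toC_add]
  exact key (toC j) (toC k) hK hJK a b
end

section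
/- For ω ∈ ℂ³ and nonzero k ∈ ℝ³, if R_k is the rotation with rows kᵀ/|k|, (k×n)ᵀ/|k×n|, (k×(k×n))ᵀ/(|k×n||k|) (with k×n ≠ 0), S = diag(−1,−1,1), and the rotated vector ω̌ = R_k ω satisfies ω̌_x = 0 and ω̌_{−k} = S conj(ω̌), then ω × ω̄ = (k/|k|) · 2 Im(ω̌_y conj(ω̌_z)) · i, i.e. Rᵀ_k(ω̌ × S conj(ω̌)) has the form (2i Im(ω̌_y conj(ω̌_z))) k/|k|. -/
/-!
Put `a = k × n` and `c = k × a`; then `k, a, c` is an orthogonal frame with `a × c = |a|² k`.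
Two vectors `u, v` orthogonal to `k` have `u × v` parallel to `k` (as `k × (u × v) = 0`), and the
Binet–Cauchy identity gives its `k`-component:
`|a|² k ⬝ (u × v) = (a × c) ⬝ (u × v) = (a ⬝ u)(c ⬝ v) - (a ⬝ v)(c ⬝ u)`.
For `u = ω`, `v = ω̄` the right side is `z - z̄ = 2i Im z` with `z = (a ⬝ ω)(c ⬝ ω̄)`, which is
`ω̌_y conj ω̌_z` up to the real factor `|a|² |k|`. Everything except this normalisation is
a polynomial identity over any commutative ring.
-/

open Matrix

noncomputable def enorm3 (j : Fin 3 → ℝ) : ℝ := Real.sqrt (j ⬝ᵥ j)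

noncomputable def Rmat (n j : Fin 3 → ℝ) : Matrix (Fin 3) (Fin 3) ℝ :=
  Matrix.of ![(enorm3 j)⁻¹ • j,
              (enorm3 (crossProduct j n))⁻¹ • crossProduct j n,
              (enorm3 (crossProduct j n) * enorm3 j)⁻¹ • crossProduct j (crossProduct j n)]

/-- The rotated vorticity `ω̌ = R_k ω` (complexified rotation applied to `ω`). -/
noncomputable def omch (n k : Fin 3 → ℝ) (ω : Fin 3 → ℂ) : Fin 3 → ℂ :=
  ((Rmat n k).map Complex.ofReal) *ᵥ ω

section CrossProduct

variable {R : Type*} [CommRing R]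

theorem smul_eq_smul_of_cross_eq_zero {k w : Fin 3 → R} (h : k ⨯₃ w = 0) :
    (k ⬝ᵥ k) • w = (k ⬝ᵥ w) • k := by
  exact (sub_eq_zero.1 (by rw [← cross_cross_eq_smul_sub_smul', h, map_zero])).symm

theorem cross_cross_eq_zero_of_dotProduct_eq_zero {k u v : Fin 3 → R}
    (hu : k ⬝ᵥ u = 0) (hv : k ⬝ᵥ v = 0) : k ⨯₃ (u ⨯₃ v) = 0 := by
  rw [cross_cross_eq_smul_sub_smul', hv, dotProduct_comm, hu, zero_smul, zero_smul, sub_zero]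

theorem cross_cross_self_of_dotProduct_eq_zero {a k : Fin 3 → R} (h : a ⬝ᵥ k = 0) :
    a ⨯₃ (k ⨯₃ a) = (a ⬝ᵥ a) • k := by
  rw [cross_cross_eq_smul_sub_smul', dotProduct_comm k, h, zero_smul, sub_zero]

theorem smul_cross_eq_of_dotProduct_eq_zero {k a u v : Fin 3 → R} (ha : a ⬝ᵥ k = 0)
    (hu : k ⬝ᵥ u = 0) (hv : k ⬝ᵥ v = 0) :
    (a ⬝ᵥ a * k ⬝ᵥ k) • (u ⨯₃ v) =
      (a ⬝ᵥ u * (k ⨯₃ a) ⬝ᵥ v - a ⬝ᵥ v * (k ⨯₃ a) ⬝ᵥ u) • k := by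
  rw [mul_smul, smul_eq_smul_of_cross_eq_zero (cross_cross_eq_zero_of_dotProduct_eq_zero hu hv),
    smul_smul, ← cross_dot_cross, cross_cross_self_of_dotProduct_eq_zero ha, smul_dotProduct,
    smul_eq_mul]

end CrossProduct

theorem toC_dotProduct_toC (x y : Fin 3 → ℝ) : toC x ⬝ᵥ toC y = ((x ⬝ᵥ y : ℝ) : ℂ) :=
  (RingHom.map_dotProduct Complex.ofRealHom x y).symm

theorem toC_cross (x y : Fin 3 → ℝ) : toC (x ⨯₃ y) = toC x ⨯₃ toC y := by
  ext i
  fin_cases i <;> simp [toC, cross_apply]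

theorem toC_smul (r : ℝ) (x : Fin 3 → ℝ) : toC (r • x) = (r : ℂ) • toC x := by
  ext i
  simp [toC]

theorem star_toC (x : Fin 3 → ℝ) : star (toC x) = toC x := by
  ext i
  simp [toC]

theorem star_toC_dotProduct (x : Fin 3 → ℝ) (ω : Fin 3 → ℂ) :
    star (toC x ⬝ᵥ ω) = toC x ⬝ᵥ star ω := by
  rw [dotProduct_star, star_toC, dotProduct_comm]

theorem enorm3_mul_self (x : Fin 3 → ℝ) : enorm3 x * enorm3 x = x ⬝ᵥ x :=
  Real.mul_self_sqrt (Finset.sum_nonneg fun i _ => mul_self_nonneg (x i))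

theorem dotProduct_self_ne_zero {x : Fin 3 → ℝ} (hx : x ≠ 0) : x ⬝ᵥ x ≠ 0 :=
  fun h => hx (dotProduct_self_eq_zero.1 h)

theorem Complex.two_mul_im_ofReal_mul_mul_I (r : ℝ) (z : ℂ) :
    2 * (((r : ℂ) * z).im : ℂ) * I = r * (z - star z) := by
  rw [im_ofReal_mul, star_def, sub_conj]
  push_cast
  ring

theorem toC_smul_cross_star {k a : Fin 3 → ℝ} {ω : Fin 3 → ℂ} (ha : a ⬝ᵥ k = 0)
    (hω : toC k ⬝ᵥ ω = 0) :
    ((a ⬝ᵥ a * k ⬝ᵥ k : ℝ) : ℂ) • (ω ⨯₃ star ω) =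
      (toC a ⬝ᵥ ω * toC (k ⨯₃ a) ⬝ᵥ star ω - star (toC a ⬝ᵥ ω * toC (k ⨯₃ a) ⬝ᵥ star ω)) •
        toC k := by
  have hak : toC a ⬝ᵥ toC k = 0 := by rw [toC_dotProduct_toC, ha, Complex.ofReal_zero]
  have hω' : toC k ⬝ᵥ star ω = 0 := by rw [← star_toC_dotProduct, hω, star_zero]
  rw [star_mul', star_toC_dotProduct, star_toC_dotProduct, star_star,
    toC_cross, Complex.ofReal_mul, ← toC_dotProduct_toC, ← toC_dotProduct_toC]
  exact smul_cross_eq_of_dotProduct_eq_zero hak hω hω'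

theorem omch_apply (n k : Fin 3 → ℝ) (ω : Fin 3 → ℂ) (i : Fin 3) :
    omch n k ω i = toC (Rmat n k i) ⬝ᵥ ω :=
  rfl

theorem omch_one_mul_conj_omch_two (n k : Fin 3 → ℝ) (ω : Fin 3 → ℂ) :
    omch n k ω 1 * (starRingEnd ℂ) (omch n k ω 2) =
      ((enorm3 (k ⨯₃ n) * enorm3 (k ⨯₃ n) * enorm3 k)⁻¹ : ℝ) *
        (toC (k ⨯₃ n) ⬝ᵥ ω * toC (k ⨯₃ (k ⨯₃ n)) ⬝ᵥ star ω) := by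
  have h₁ : omch n k ω 1 = ((enorm3 (k ⨯₃ n))⁻¹ : ℝ) * (toC (k ⨯₃ n) ⬝ᵥ ω) := by
    rw [omch_apply, show Rmat n k 1 = (enorm3 (k ⨯₃ n))⁻¹ • (k ⨯₃ n) from rfl, toC_smul,
      smul_dotProduct, smul_eq_mul]
  have h₂ : omch n k ω 2 =
      ((enorm3 (k ⨯₃ n) * enorm3 k)⁻¹ : ℝ) * (toC (k ⨯₃ (k ⨯₃ n)) ⬝ᵥ ω) := by
    rw [omch_apply, show Rmat n k 2 = (enorm3 (k ⨯₃ n) * enorm3 k)⁻¹ • (k ⨯₃ (k ⨯₃ n)) from rfl,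
      toC_smul, smul_dotProduct, smul_eq_mul]
  rw [h₁, h₂, map_mul, Complex.conj_ofReal, ← Complex.star_def, star_toC_dotProduct]
  push_cast
  ring

theorem helicity_rotated_general (n k : Fin 3 → ℝ) (hkn : crossProduct k n ≠ 0)
    (ω : Fin 3 → ℂ) (hdiv : toC k ⬝ᵥ ω = 0) :
    crossProduct ω (star ω) =
      (2 * (((omch n k ω 1 * (starRingEnd ℂ) (omch n k ω 2)).im : ℝ) : ℂ) *
        Complex.I / ((enorm3 k : ℝ) : ℂ)) • toC k := by
  have hk : k ≠ 0 := by
    rintro rfl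
    exact hkn (by simp)
  have hne : (((k ⨯₃ n) ⬝ᵥ (k ⨯₃ n) * k ⬝ᵥ k : ℝ) : ℂ) ≠ 0 := by
    exact_mod_cast mul_ne_zero (dotProduct_self_ne_zero hkn) (dotProduct_self_ne_zero hk)
  have hframe := toC_smul_cross_star (a := k ⨯₃ n) (by rw [dotProduct_comm, dot_self_cross]) hdiv
  rw [← inv_smul_smul₀ hne (ω ⨯₃ star ω), hframe, smul_smul, omch_one_mul_conj_omch_two,
    Complex.two_mul_im_ofReal_mul_mul_I, ← enorm3_mul_self, ← enorm3_mul_self]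
  congr 1
  push_cast
  ring

/-- In rotated coordinates `ω̌ = R_k ω` the helicity combination becomes
`ω × ω̄ = (2 Im(ω̌_y conj ω̌_z) i / |k|) k`. -/
theorem helicity_rotated (n k : Fin 3 → ℝ) (hk : k ≠ 0) (hkn : crossProduct k n ≠ 0)
    (ω : Fin 3 → ℂ) (hdiv : toC k ⬝ᵥ ω = 0) :
    crossProduct ω (star ω) =
      (2 * (((omch n k ω 1 * (starRingEnd ℂ) (omch n k ω 2)).im : ℝ) : ℂ) *
        Complex.I / ((enorm3 k : ℝ) : ℂ)) • toC k :=
  helicity_rotated_general n k hkn ω hdiv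
end
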